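/- arXiv:1907.11807 — 2 statements merged into one kernel-verified Lean document; each statement's English description precedes it below -/
import Mathlib

section
/- For every δ > 0, the function f_δ(x) = Σ_{λ∈ℤ} exp(-(x-λ)²/δ) is not constant on ℝ. -/
/-!
Jacobi's transformation formula for `θ(z, τ) = ∑ₙ exp(2πinz + πin²τ)` (Poisson summation for the
Gaussian) gives `f_δ(x) = √(πδ) θ(x, iπδ) = √(πδ) ∑ₙ exp(-π²δn²) exp(2πinx)`. Hence
`f_δ(0) - f_δ(1/2) = √(πδ) ∑ₙ (1 - (-1)ⁿ) exp(-π²δn²)`, a sum of nonnegative terms whose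
`n = 1` term is positive.
-/

open Real Complex

lemma ofReal_cpow_one_half {r : ℝ} (hr : 0 ≤ r) : (r : ℂ) ^ (1 / 2 : ℂ) = (√r : ℝ) := by
  rw [Real.sqrt_eq_rpow, ofReal_cpow hr]
  norm_num

lemma ofReal_tsum_exp_neg_sq_div_eq_jacobiTheta₂ {δ : ℝ} (hδ : 0 < δ) (x : ℝ) :
    ((∑' n : ℤ, Real.exp (-(x - n) ^ 2 / δ) : ℝ) : ℂ) =
      √(π * δ) * jacobiTheta₂ x ((π * δ : ℝ) * I) := by
  have hsqrt : ((√(π * δ) : ℝ) : ℂ) ≠ 0 :=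
    ofReal_ne_zero.2 (Real.sqrt_pos.2 (mul_pos pi_pos hδ)).ne'
  have hroot : (-I * ((π * δ : ℝ) * I)) ^ (1 / 2 : ℂ) = (√(π * δ) : ℝ) := by
    rw [← ofReal_cpow_one_half (mul_pos pi_pos hδ).le, neg_mul, mul_left_comm, I_mul_I]
    ring_nf
  rw [jacobiTheta₂_functional_equation, hroot, ← mul_assoc, ← mul_assoc, mul_one_div_cancel hsqrt,
    one_mul, jacobiTheta₂, ← tsum_mul_left, ofReal_tsum]
  refine tsum_congr fun n ↦ ?_
  rw [jacobiTheta₂_term, ← Complex.exp_add, ofReal_exp]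
  congr 1
  push_cast
  field_simp
  ring

lemma jacobiTheta₂_term_zero_sub_half_mul_I (n : ℤ) (t : ℝ) :
    jacobiTheta₂_term n 0 (t * I) - jacobiTheta₂_term n (1 / 2) (t * I) =
      ((1 - (-1) ^ n) * Real.exp (-π * t * n ^ 2) : ℝ) := by
  have hsign : cexp (π * I * n) = (-1) ^ n := by
    rw [mul_comm, exp_int_mul, exp_pi_mul_I]
  have hgauss : cexp (π * I * n ^ 2 * (t * I)) = Real.exp (-π * t * n ^ 2) := by
    rw [ofReal_exp]
    congr 1
    push_cast
    ring_nf
    rw [I_sq]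
    ring
  rw [jacobiTheta₂_term, jacobiTheta₂_term, mul_zero, zero_add,
    show 2 * π * I * n * (1 / 2 : ℂ) + π * I * n ^ 2 * (t * I) =
      π * I * n + π * I * n ^ 2 * (t * I) by ring, Complex.exp_add, hsign, hgauss]
  push_cast
  ring

lemma jacobiTheta₂_zero_sub_half_mul_I {t : ℝ} (ht : 0 < t) :
    jacobiTheta₂ 0 (t * I) - jacobiTheta₂ (1 / 2) (t * I) =
      (∑' n : ℤ, (1 - (-1) ^ n) * Real.exp (-π * t * n ^ 2) : ℝ) := by
  have hτ : 0 < (t * I).im := by simpa using ht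
  rw [jacobiTheta₂, jacobiTheta₂, ← ((summable_jacobiTheta₂_term_iff 0 _).2 hτ).tsum_sub
    ((summable_jacobiTheta₂_term_iff (1 / 2) _).2 hτ), ofReal_tsum]
  simp_rw [jacobiTheta₂_term_zero_sub_half_mul_I]

lemma summable_exp_neg_pi_mul_int_sq {t : ℝ} (ht : 0 < t) :
    Summable fun n : ℤ ↦ Real.exp (-π * t * n ^ 2) := by
  simpa [mul_assoc] using summable_pow_mul_jacobiTheta₂_term_bound 0 ht 0

lemma tsum_one_sub_neg_one_zpow_mul_pos {f : ℤ → ℝ} (hf : Summable f) (hf0 : ∀ n, 0 ≤ f n)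
    (hf1 : 0 < f 1) : 0 < ∑' n : ℤ, (1 - (-1) ^ n) * f n := by
  have hsign : ∀ n : ℤ, 0 ≤ 1 - (-1 : ℝ) ^ n := fun n ↦ by
    rcases n.even_or_odd with h | h <;> simp [h.neg_one_zpow]
  have hle : ∀ n : ℤ, (1 - (-1) ^ n) * f n ≤ 2 * f n := fun n ↦
    mul_le_mul_of_nonneg_right (by rcases n.even_or_odd with h | h <;> norm_num [h.neg_one_zpow])
      (hf0 n)
  exact ((hf.mul_left 2).of_nonneg_of_le (fun n ↦ mul_nonneg (hsign n) (hf0 n)) hle).tsum_pos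
    (fun n ↦ mul_nonneg (hsign n) (hf0 n)) 1 (by norm_num [hf1])

/-- For every `δ > 0`, the function `f_δ(x) = ∑_{λ ∈ ℤ} exp(-(x-λ)²/δ)`
is not constant on `ℝ`. -/
theorem theta_not_constant (δ : ℝ) (hδ : 0 < δ) :
    ∃ x y : ℝ, (∑' l : ℤ, Real.exp (-(x - l) ^ 2 / δ)) ≠
      (∑' l : ℤ, Real.exp (-(y - l) ^ 2 / δ)) := by
  refine ⟨0, 1 / 2, fun h ↦ ?_⟩
  have hπδ : 0 < π * δ := mul_pos pi_pos hδ
  have hθ : jacobiTheta₂ 0 ((π * δ : ℝ) * I) - jacobiTheta₂ (1 / 2) ((π * δ : ℝ) * I) = 0 := by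
    have h' := congrArg ((↑) : ℝ → ℂ) h
    rw [ofReal_tsum_exp_neg_sq_div_eq_jacobiTheta₂ hδ, ofReal_tsum_exp_neg_sq_div_eq_jacobiTheta₂ hδ]
      at h'
    simp only [ofReal_zero, ofReal_div, ofReal_one, ofReal_ofNat] at h'
    exact sub_eq_zero.2 (mul_left_cancel₀ (ofReal_ne_zero.2 (Real.sqrt_pos.2 hπδ).ne') h')
  rw [jacobiTheta₂_zero_sub_half_mul_I hπδ, ofReal_eq_zero] at hθ
  exact (tsum_one_sub_neg_one_zpow_mul_pos (summable_exp_neg_pi_mul_int_sq hπδ)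
    (fun n ↦ (exp_pos _).le) (exp_pos _)).ne' hθ
end

section
/- Let X be a random variable taking finitely many real values, with mean zero, symmetric distribution, and λ = min over the range of P[X = x] > 0. Then for every q ≥ 2 and all a, b ∈ ℝ, ‖a + ρbX‖_q ≤ ‖a + bX‖_2 where ρ = (1/√(q−1))·λ^{1/2 − 1/q}; i.e., X is (2, q, ρ)-hypercontractive. -/
/-!
By symmetry, `E|a + ρbX|^q` is the average of `E|a ± ρbX|^q`, and the two-point (Bonami) inequality
`|a + t|^q + |a - t|^q ≤ 2 (a² + (q-1) t²)^(q/2)` bounds it by `E (a² + c (bX)²)^(q/2)` with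
`c = (q-1) ρ² = λ^(1-2/q)`. Every atom of `X` has mass at least `λ`, so `λ (bX)² ≤ E (bX)²`
pointwise: `(bX)²` lives in `[0, E (bX)² / λ]`, and by convexity `E (a² + c (bX)²)^(q/2)` is at most
its value for the two-point law on these endpoints with the same mean, which puts mass `λ` on the
top. The resulting scalar inequality `(1-λ) A^r + (λ^(1/r) A + M)^r ≤ (A + M)^r`, `r = q/2`, says
that the increments of the convex function `x ↦ x^r` grow with `x`.

The two-point inequality reduces by homogeneity to `a = 1`, `|t| ≤ 1`, where it is proved by
comparing derivatives, by induction in steps `q - 2 → q`.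
-/

open MeasureTheory Real Set

lemma ConvexOn.mul_le_of_mem_Icc {s : Set ℝ} {f : ℝ → ℝ} (hf : ConvexOn ℝ s f) {x y z : ℝ}
    (hx : x ∈ s) (hz : z ∈ s) (hy : y ∈ Icc x z) :
    (z - x) * f y ≤ (z - y) * f x + (y - x) * f z := by
  rcases eq_or_lt_of_le hy.1 with rfl | hxy
  · simp
  rcases eq_or_lt_of_le hy.2 with rfl | hyz
  · simp
  exact hf.secant_mono_aux1 hx hz hxy hyz

lemma ConvexOn.add_sub_le_add_sub {s : Set ℝ} {f : ℝ → ℝ} (hf : ConvexOn ℝ s f) {x y d : ℝ}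
    (hx : x ∈ s) (hyd : y + d ∈ s) (hxy : x ≤ y) (hd : 0 ≤ d) :
    f (x + d) - f x ≤ f (y + d) - f y := by
  rcases eq_or_lt_of_le hxy with rfl | hxy
  · rfl
  have hy := hf.mul_le_of_mem_Icc hx hyd (⟨hxy.le, by linarith⟩ : y ∈ Icc x (y + d))
  have hxd := hf.mul_le_of_mem_Icc hx hyd (⟨by linarith, by linarith⟩ : x + d ∈ Icc x (y + d))
  have hsum : (y + d - x) * (f y + f (x + d)) ≤ (y + d - x) * (f x + f (y + d)) := by
    linarith
  linarith [le_of_mul_le_mul_left hsum (by linarith)]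

lemma one_sub_mul_rpow_add_mul_rpow_le {r l A M : ℝ} (hr : 1 ≤ r) (hl0 : 0 < l) (hl1 : l ≤ 1)
    (hA : 0 ≤ A) (hM : 0 ≤ M) :
    (1 - l) * A ^ r + l * (A + l ^ (1 - 1 / r) * (M / l)) ^ r ≤ (A + M) ^ r := by
  have hr0 : 0 < r := by linarith
  set u := l ^ (1 / r) with hu
  have hu0 : 0 ≤ u := rpow_nonneg hl0.le _
  have hur : u ^ r = l := by rw [hu, ← rpow_mul hl0.le, one_div_mul_cancel hr0.ne', rpow_one]
  have hshift : u * (l ^ (1 - 1 / r) * (M / l)) = M := by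
    rw [hu, ← mul_assoc, ← rpow_add hl0, add_sub_cancel, rpow_one]
    field_simp
  have hmul : l * (A + l ^ (1 - 1 / r) * (M / l)) ^ r = (u * A + M) ^ r := by
    nth_rw 1 [← hur]
    rw [← mul_rpow hu0 (by positivity), mul_add, hshift]
  have hinc := (convexOn_rpow hr).add_sub_le_add_sub (mem_Ici.2 (mul_nonneg hu0 hA))
    (mem_Ici.2 (by positivity))
    (mul_le_of_le_one_left hA (rpow_le_one hl0.le hl1 (by positivity))) hM
  simp only [mul_rpow hu0 hA, hur] at hinc
  rw [hmul]
  linarith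

lemma rpow_add_rpow_le_two_mul_add_div_two_rpow {p x y : ℝ} (hp0 : 0 ≤ p) (hp1 : p ≤ 1)
    (hx : 0 ≤ x) (hy : 0 ≤ y) : x ^ p + y ^ p ≤ 2 * ((x + y) / 2) ^ p := by
  have h := (concaveOn_rpow hp0 hp1).2 hx hy (by norm_num : (0:ℝ) ≤ 1 / 2)
    (by norm_num : (0:ℝ) ≤ 1 / 2) (by norm_num)
  simp only [smul_eq_mul] at h
  rw [show (1 / 2 : ℝ) * x + 1 / 2 * y = (x + y) / 2 by ring] at h
  linarith

lemma sq_rpow_div_two (x r : ℝ) : (x ^ 2) ^ (r / 2) = |x| ^ r := by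
  rw [rpow_div_two_eq_sqrt r (sq_nonneg x), sqrt_sq_eq_abs]

lemma hasDerivAt_one_add_rpow (p : ℝ) {x : ℝ} (hx : 0 < 1 + x) :
    HasDerivAt (fun x => (1 + x) ^ p) (p * (1 + x) ^ (p - 1)) x := by
  simpa using ((hasDerivAt_id x).const_add 1).rpow_const (p := p) (Or.inl hx.ne')

lemma hasDerivAt_one_sub_rpow (p : ℝ) {x : ℝ} (hx : 0 < 1 - x) :
    HasDerivAt (fun x => (1 - x) ^ p) (-(p * (1 - x) ^ (p - 1))) x := by
  simpa using ((hasDerivAt_id x).const_sub 1).rpow_const (p := p) (Or.inl hx.ne')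

lemma hasDerivAt_one_add_rpow_sub_one_sub_rpow (p : ℝ) {x : ℝ} (hx : x ∈ Ico (0:ℝ) 1) :
    HasDerivAt (fun x => (1 + x) ^ p - (1 - x) ^ p)
      (p * ((1 + x) ^ (p - 1) + (1 - x) ^ (p - 1))) x := by
  have h := (hasDerivAt_one_add_rpow p (by linarith [hx.1])).sub
    (hasDerivAt_one_sub_rpow p (by linarith [hx.2]))
  exact h.congr_deriv (by ring)

lemma one_add_rpow_sub_one_sub_rpow_le_of_le_two {p t : ℝ} (hp1 : 1 ≤ p) (hp2 : p ≤ 2)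
    (ht : t ∈ Icc (0:ℝ) 1) : (1 + t) ^ p - (1 - t) ^ p ≤ 2 * p * t := by
  refine image_le_of_deriv_right_le_deriv_boundary
    (Continuous.continuousOn (by fun_prop (disch := linarith)))
    (fun x hx => (hasDerivAt_one_add_rpow_sub_one_sub_rpow p hx).hasDerivWithinAt)
    (by simp) (by fun_prop)
    (fun x _ => ((hasDerivAt_id x).const_mul (2 * p)).hasDerivWithinAt) (fun x hx => ?_) ht
  have h := rpow_add_rpow_le_two_mul_add_div_two_rpow (p := p - 1) (by linarith) (by linarith)
    (by linarith [hx.1] : 0 ≤ 1 + x) (by linarith [hx.2] : 0 ≤ 1 - x)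
  rw [show (1 + x + (1 - x)) / 2 = 1 by ring, one_rpow] at h
  simp only [mul_one]
  nlinarith

lemma one_add_rpow_sub_one_sub_rpow_le_of_two_le {p t : ℝ} (hp : 2 ≤ p) (ht : t ∈ Icc (0:ℝ) 1) :
    (1 + t) ^ p - (1 - t) ^ p ≤ p * t * ((1 + t) ^ (p - 1) + (1 - t) ^ (p - 1)) := by
  have hB : ∀ x ∈ Ico (0:ℝ) 1,
      HasDerivAt (fun x => p * x * ((1 + x) ^ (p - 1) + (1 - x) ^ (p - 1)))
        (p * ((1 + x) ^ (p - 1) + (1 - x) ^ (p - 1))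
          + p * (p - 1) * x * ((1 + x) ^ (p - 2) - (1 - x) ^ (p - 2))) x := by
    intro x hx
    have h := ((hasDerivAt_id x).const_mul p).mul ((hasDerivAt_one_add_rpow (p - 1)
      (by linarith [hx.1])).add (hasDerivAt_one_sub_rpow (p - 1) (by linarith [hx.2])))
    rw [show p - 1 - 1 = p - 2 by ring] at h
    exact h.congr_deriv (by simp only [id, Pi.add_apply]; ring)
  refine image_le_of_deriv_right_le_deriv_boundary
    (Continuous.continuousOn (by fun_prop (disch := linarith)))
    (fun x hx => (hasDerivAt_one_add_rpow_sub_one_sub_rpow p hx).hasDerivWithinAt)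
    (by simp) (Continuous.continuousOn (by fun_prop (disch := linarith)))
    (fun x hx => (hB x hx).hasDerivWithinAt) (fun x hx => ?_) ht
  have hmono : (1 - x) ^ (p - 2) ≤ (1 + x) ^ (p - 2) :=
    rpow_le_rpow (by linarith [hx.2]) (by linarith [hx.1]) (by linarith)
  have hx0 : 0 ≤ p * (p - 1) * x := mul_nonneg (by nlinarith) hx.1
  nlinarith [mul_le_mul_of_nonneg_left hmono hx0]

/-- For a Rademacher sign `ε`, this says `‖1 + t ε‖_p ≤ ‖1 + √κ t ε‖_2` for `t ∈ [0, 1]`. -/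
def TwoPointIneq (p κ : ℝ) : Prop :=
  ∀ t ∈ Icc (0:ℝ) 1, (1 + t) ^ p + (1 - t) ^ p ≤ 2 * (1 + κ * t ^ 2) ^ (p / 2)

lemma TwoPointIneq.mono {p κ κ' : ℝ} (h : TwoPointIneq p κ) (hp : 0 ≤ p) (hκ : 0 ≤ κ)
    (hκκ' : κ ≤ κ') : TwoPointIneq p κ' := by
  intro t ht
  refine (h t ht).trans ?_
  gcongr

lemma twoPointIneq_one {p : ℝ} (hp0 : 0 ≤ p) (hp2 : p ≤ 2) : TwoPointIneq p 1 := by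
  intro t ht
  have h := rpow_add_rpow_le_two_mul_add_div_two_rpow (p := p / 2) (by linarith) (by linarith)
    (sq_nonneg (1 + t)) (sq_nonneg (1 - t))
  rwa [sq_rpow_div_two, sq_rpow_div_two, abs_of_nonneg (by linarith [ht.1]),
    abs_of_nonneg (by linarith [ht.2]),
    show ((1 + t) ^ 2 + (1 - t) ^ 2) / 2 = 1 + 1 * t ^ 2 by ring] at h

lemma one_add_rpow_sub_one_sub_rpow_le_of_twoPointIneq {q x : ℝ} (hq : 2 ≤ q)
    (h : TwoPointIneq (q - 2) (q - 1)) (hx : x ∈ Icc (0:ℝ) 1) :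
    (1 + x) ^ (q - 1) - (1 - x) ^ (q - 1)
      ≤ 2 * (q - 1) * x * (1 + (q - 1) * x ^ 2) ^ ((q - 2) / 2) := by
  have hqx : 0 ≤ (q - 1) * x := mul_nonneg (by linarith) hx.1
  rcases le_total q 3 with h3 | h3
  · have hR : 1 ≤ (1 + (q - 1) * x ^ 2) ^ ((q - 2) / 2) :=
      one_le_rpow (by nlinarith [sq_nonneg x]) (by linarith)
    calc _ ≤ 2 * (q - 1) * x := one_add_rpow_sub_one_sub_rpow_le_of_le_two (by linarith)
            (by linarith) hx
      _ ≤ _ := le_mul_of_one_le_right (by linarith) hR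
  · calc _ ≤ (q - 1) * x * ((1 + x) ^ (q - 2) + (1 - x) ^ (q - 2)) := by
          simpa only [show q - 1 - 1 = q - 2 by ring] using
            one_add_rpow_sub_one_sub_rpow_le_of_two_le (p := q - 1) (by linarith) hx
      _ ≤ (q - 1) * x * (2 * (1 + (q - 1) * x ^ 2) ^ ((q - 2) / 2)) := by gcongr; exact h x hx
      _ = _ := by ring

lemma TwoPointIneq.of_sub_two {q : ℝ} (hq : 2 ≤ q) (h : TwoPointIneq (q - 2) (q - 1)) :
    TwoPointIneq q (q - 1) := by
  have hf : ∀ x ∈ Ico (0:ℝ) 1, HasDerivAt (fun x => (1 + x) ^ q + (1 - x) ^ q)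
      (q * ((1 + x) ^ (q - 1) - (1 - x) ^ (q - 1))) x := fun x hx =>
    ((hasDerivAt_one_add_rpow q (by linarith [hx.1])).add
      (hasDerivAt_one_sub_rpow q (by linarith [hx.2]))).congr_deriv (by ring)
  have hB : ∀ x ∈ Ico (0:ℝ) 1, HasDerivAt (fun x => 2 * (1 + (q - 1) * x ^ 2) ^ (q / 2))
      (q * (2 * (q - 1) * x * (1 + (q - 1) * x ^ 2) ^ ((q - 2) / 2))) x := by
    intro x hx
    have hpos : 0 < 1 + (q - 1) * x ^ 2 := by nlinarith [sq_nonneg x]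
    have h := ((((hasDerivAt_pow 2 x).const_mul (q - 1)).const_add 1).rpow_const
      (p := q / 2) (Or.inl hpos.ne')).const_mul 2
    rw [show q / 2 - 1 = (q - 2) / 2 by ring] at h
    exact h.congr_deriv (by push_cast; ring)
  intro t ht
  exact image_le_of_deriv_right_le_deriv_boundary
    (Continuous.continuousOn (by fun_prop (disch := linarith)))
    (fun x hx => (hf x hx).hasDerivWithinAt) (by norm_num)
    (Continuous.continuousOn (by fun_prop (disch := linarith)))
    (fun x hx => (hB x hx).hasDerivWithinAt)
    (fun x hx => mul_le_mul_of_nonneg_left (one_add_rpow_sub_one_sub_rpow_le_of_twoPointIneq hq h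
      (Ico_subset_Icc_self hx)) (by linarith)) ht

lemma twoPointIneq_sub_one {q : ℝ} (hq : 2 ≤ q) : TwoPointIneq q (q - 1) := by
  suffices ∀ n : ℕ, ∀ q : ℝ, 2 ≤ q → q ≤ n → TwoPointIneq q (q - 1) from
    let ⟨n, hn⟩ := exists_nat_ge q; this n q hq hn
  intro n
  induction n with
  | zero => intro q hq hn; norm_num at hn; linarith
  | succ n ih =>
    intro q hq hn
    refine TwoPointIneq.of_sub_two hq ?_
    rcases le_or_gt q 4 with h4 | h4
    · exact (twoPointIneq_one (by linarith) (by linarith)).mono (by linarith) zero_le_one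
        (by linarith)
    · exact (ih (q - 2) (by linarith) (by push_cast at hn; linarith)).mono (by linarith)
        (by linarith) (by linarith)

lemma TwoPointIneq.of_abs_le_one {p κ s : ℝ} (h : TwoPointIneq p κ) (hs : |s| ≤ 1) :
    (1 + s) ^ p + (1 - s) ^ p ≤ 2 * (1 + κ * s ^ 2) ^ (p / 2) := by
  rcases le_total 0 s with hs0 | hs0
  · exact h s ⟨hs0, (abs_le.mp hs).2⟩
  · have := h (-s) ⟨by linarith, by linarith [(abs_le.mp hs).1]⟩
    rw [neg_sq, ← sub_eq_add_neg, sub_neg_eq_add] at this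
    linarith

lemma abs_add_rpow_add_abs_sub_rpow_le_of_abs_le {q a t : ℝ} (hq : 2 ≤ q) (hta : |t| ≤ |a|) :
    |a + t| ^ q + |a - t| ^ q ≤ 2 * (a ^ 2 + (q - 1) * t ^ 2) ^ (q / 2) := by
  rcases eq_or_ne a 0 with rfl | ha
  · obtain rfl : t = 0 := abs_nonpos_iff.mp (by simpa using hta)
    simp [zero_rpow (by linarith : q ≠ 0), zero_rpow (by linarith : q / 2 ≠ 0)]
  set s := t / a with hs_def
  have hs : |s| ≤ 1 := by rw [abs_div]; exact div_le_one_of_le₀ hta (abs_nonneg a)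
  have e₁ : |a + t| = |a| * (1 + s) := by
    rw [← abs_of_nonneg (by linarith [(abs_le.mp hs).1] : 0 ≤ 1 + s), ← abs_mul]
    congr 1; rw [hs_def]; field_simp
  have e₂ : |a - t| = |a| * (1 - s) := by
    rw [← abs_of_nonneg (by linarith [(abs_le.mp hs).2] : 0 ≤ 1 - s), ← abs_mul]
    congr 1; rw [hs_def]; field_simp
  have e₃ : a ^ 2 + (q - 1) * t ^ 2 = a ^ 2 * (1 + (q - 1) * s ^ 2) := by rw [hs_def]; field_simp
  have hpos : 0 ≤ 1 + (q - 1) * s ^ 2 := by nlinarith [sq_nonneg s]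
  rw [e₁, e₂, e₃, mul_rpow (abs_nonneg a) (by linarith [(abs_le.mp hs).1]),
    mul_rpow (abs_nonneg a) (by linarith [(abs_le.mp hs).2]), mul_rpow (sq_nonneg a) hpos,
    sq_rpow_div_two, ← mul_add, mul_left_comm]
  exact mul_le_mul_of_nonneg_left ((twoPointIneq_sub_one hq).of_abs_le_one hs)
    (rpow_nonneg (abs_nonneg a) q)

theorem abs_add_rpow_add_abs_sub_rpow_le {q : ℝ} (hq : 2 ≤ q) (a t : ℝ) :
    |a + t| ^ q + |a - t| ^ q ≤ 2 * (a ^ 2 + (q - 1) * t ^ 2) ^ (q / 2) := by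
  rcases le_total |t| |a| with h | h
  · exact abs_add_rpow_add_abs_sub_rpow_le_of_abs_le hq h
  · -- the left side is symmetric in `a` and `t`, and swapping them enlarges the right side
    have h' := abs_add_rpow_add_abs_sub_rpow_le_of_abs_le hq h
    rw [add_comm t a, abs_sub_comm] at h'
    refine h'.trans ?_
    have hat : a ^ 2 ≤ t ^ 2 := sq_le_sq.mpr h
    have h0 : 0 ≤ t ^ 2 + (q - 1) * a ^ 2 := by nlinarith [sq_nonneg a, sq_nonneg t]
    have hle : t ^ 2 + (q - 1) * a ^ 2 ≤ a ^ 2 + (q - 1) * t ^ 2 := by nlinarith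
    exact mul_le_mul_of_nonneg_left (rpow_le_rpow h0 hle (by linarith)) zero_le_two

section Integral

variable {Ω α : Type*} [MeasurableSpace Ω] {μ : Measure Ω}

lemma integrable_comp_of_finite_range [MeasurableSpace α] [IsFiniteMeasure μ] {X : Ω → α}
    (hX : Measurable X) (hfin : (range X).Finite) {φ : α → ℝ} (hφ : Measurable φ) :
    Integrable (fun ω => φ (X ω)) μ := by
  obtain ⟨C, hC⟩ := (hfin.image fun x => ‖φ x‖).bddAbove
  exact Integrable.of_bound (hφ.comp hX).aestronglyMeasurable C
    (ae_of_all _ fun ω => hC (mem_image_of_mem _ (mem_range_self ω)))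

lemma mul_le_integral_comp_of_le_measureReal [IsFiniteMeasure μ] {X : Ω → α} {φ : α → ℝ}
    (hφ : 0 ≤ φ) (hint : Integrable (fun ω => φ (X ω)) μ) {l : ℝ}
    (hl : ∀ x ∈ range X, l ≤ μ.real (X ⁻¹' {x})) (ω : Ω) :
    l * φ (X ω) ≤ ∫ ω, φ (X ω) ∂μ :=
  calc l * φ (X ω) ≤ φ (X ω) * μ.real {ω' | φ (X ω) ≤ φ (X ω')} := by
        rw [mul_comm]
        refine mul_le_mul_of_nonneg_left ((hl _ (mem_range_self ω)).trans
          (measureReal_mono fun ω' hω' => ?_)) (hφ _)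
        simp_all
    _ ≤ ∫ ω, φ (X ω) ∂μ :=
        mul_meas_ge_le_integral_of_nonneg (f := fun ω => φ (X ω)) (ae_of_all _ fun ω => hφ _)
          hint _

lemma integral_add_sq_of_integral_eq_zero [IsProbabilityMeasure μ] {Y : Ω → ℝ}
    (hY : Integrable Y μ) (hY2 : Integrable (fun ω => Y ω ^ 2) μ) (hmean : ∫ ω, Y ω ∂μ = 0)
    (a : ℝ) : ∫ ω, (a + Y ω) ^ 2 ∂μ = a ^ 2 + ∫ ω, Y ω ^ 2 ∂μ := by
  have hexp : ∀ ω, (a + Y ω) ^ 2 = a ^ 2 + (2 * a * Y ω + Y ω ^ 2) := fun ω => by ring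
  simp_rw [hexp]
  rw [integral_add (g := fun ω => 2 * a * Y ω + Y ω ^ 2) (integrable_const _)
      ((hY.const_mul _).add hY2),
    integral_add (hY.const_mul _) hY2, integral_const_mul, hmean]
  simp

lemma ConvexOn.integral_comp_le [IsProbabilityMeasure μ] {f : ℝ → ℝ} {x₀ x₁ t : ℝ}
    (hf : ConvexOn ℝ (Icc x₀ x₁) f) {Z : Ω → ℝ} (hZ : ∀ ω, Z ω ∈ Icc x₀ x₁)
    (hZi : Integrable Z μ) (hfZ : Integrable (fun ω => f (Z ω)) μ)
    (hmean : ∫ ω, Z ω ∂μ = (1 - t) * x₀ + t * x₁) :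
    ∫ ω, f (Z ω) ∂μ ≤ (1 - t) * f x₀ + t * f x₁ := by
  obtain ⟨ω₀⟩ := nonempty_of_isProbabilityMeasure μ
  rcases eq_or_lt_of_le ((hZ ω₀).1.trans (hZ ω₀).2) with rfl | hlt
  · have hconst : ∀ ω, f (Z ω) = f x₀ := fun ω => by
      rw [le_antisymm (hZ ω).2 (hZ ω).1]
    simp_rw [hconst, integral_const, probReal_univ, one_smul]
    linarith
  have hchord : ∀ ω, (x₁ - x₀) * f (Z ω) ≤ (x₁ * f x₀ - x₀ * f x₁) + (f x₁ - f x₀) * Z ω :=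
    fun ω => (hf.mul_le_of_mem_Icc (left_mem_Icc.2 hlt.le) (right_mem_Icc.2 hlt.le)
      (hZ ω)).trans_eq (by ring)
  have h := integral_mono (g := fun ω => (x₁ * f x₀ - x₀ * f x₁) + (f x₁ - f x₀) * Z ω)
    (hfZ.const_mul _) ((integrable_const _).add (hZi.const_mul _)) hchord
  rw [integral_const_mul, integral_add (integrable_const _) (hZi.const_mul _), integral_const,
    integral_const_mul, hmean, probReal_univ, one_smul] at h
  refine le_of_mul_le_mul_left ?_ (sub_pos.2 hlt)
  linarith

lemma integral_add_mul_rpow_le [IsProbabilityMeasure μ] {Z : Ω → ℝ} {r l A : ℝ} (hr : 1 ≤ r)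
    (hl0 : 0 < l) (hl1 : l ≤ 1) (hA : 0 ≤ A) (hZ0 : ∀ ω, 0 ≤ Z ω)
    (hZl : ∀ ω, l * Z ω ≤ ∫ ω, Z ω ∂μ) (hZi : Integrable Z μ)
    (hfZ : Integrable (fun ω => (A + l ^ (1 - 1 / r) * Z ω) ^ r) μ) :
    ∫ ω, (A + l ^ (1 - 1 / r) * Z ω) ^ r ∂μ ≤ (A + ∫ ω, Z ω ∂μ) ^ r := by
  set M := ∫ ω, Z ω ∂μ
  set c := l ^ (1 - 1 / r)
  have hc : 0 ≤ c := rpow_nonneg hl0.le _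
  have hM : 0 ≤ M := integral_nonneg hZ0
  have hconv : ConvexOn ℝ (Icc A (A + c * (M / l))) fun x => x ^ r :=
    (convexOn_rpow hr).subset (fun x hx => le_trans hA hx.1) (convex_Icc _ _)
  have hrange : ∀ ω, A + c * Z ω ∈ Icc A (A + c * (M / l)) := fun ω =>
    ⟨by nlinarith [hZ0 ω], by gcongr; rw [le_div_iff₀ hl0]; linarith [hZl ω]⟩
  refine (hconv.integral_comp_le hrange ((integrable_const _).add (hZi.const_mul _)) hfZ ?_).trans
    (one_sub_mul_rpow_add_mul_rpow_le hr hl0 hl1 hA hM)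
  rw [integral_add (integrable_const _) (hZi.const_mul _), integral_const, integral_const_mul,
    probReal_univ, one_smul]
  field_simp
  ring

lemma integral_abs_add_mul_rpow_le_of_symmetric [IsFiniteMeasure μ] {X : Ω → ℝ} (hX : Measurable X)
    (hfin : (range X).Finite) (hsym : μ.map X = μ.map (fun ω => -X ω)) {q : ℝ} (hq : 2 ≤ q)
    (a b : ℝ) :
    ∫ ω, |a + b * X ω| ^ q ∂μ ≤ ∫ ω, (a ^ 2 + (q - 1) * (b * X ω) ^ 2) ^ (q / 2) ∂μ := by
  have hint : ∀ φ : ℝ → ℝ, Measurable φ → Integrable (fun ω => φ (X ω)) μ :=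
    fun φ hφ => integrable_comp_of_finite_range hX hfin hφ
  have hflip : ∫ ω, |a - b * X ω| ^ q ∂μ = ∫ ω, |a + b * X ω| ^ q ∂μ := by
    have hid : ProbabilityTheory.IdentDistrib X (fun ω => -X ω) μ μ :=
      ⟨hX.aemeasurable, hX.neg.aemeasurable, hsym⟩
    have := (hid.comp (u := fun x => |a - b * x| ^ q) (by fun_prop)).integral_eq
    simpa [Function.comp_def, sub_eq_add_neg] using this
  have hIadd := hint (fun x => |a + b * x| ^ q) (by fun_prop)
  have hIsub := hint (fun x => |a - b * x| ^ q) (by fun_prop)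
  have hI := hint (fun x => (a ^ 2 + (q - 1) * (b * x) ^ 2) ^ (q / 2)) (by fun_prop)
  calc ∫ ω, |a + b * X ω| ^ q ∂μ
      = (∫ ω, |a + b * X ω| ^ q ∂μ + ∫ ω, |a - b * X ω| ^ q ∂μ) / 2 := by rw [hflip]; ring
    _ = (∫ ω, (|a + b * X ω| ^ q + |a - b * X ω| ^ q) ∂μ) / 2 := by
        rw [integral_add hIadd hIsub]
    _ ≤ (∫ ω, 2 * (a ^ 2 + (q - 1) * (b * X ω) ^ 2) ^ (q / 2) ∂μ) / 2 := by
        gcongr ?_ / 2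
        exact integral_mono (hIadd.add hIsub) (hI.const_mul 2)
          fun ω => abs_add_rpow_add_abs_sub_rpow_le hq a (b * X ω)
    _ = ∫ ω, (a ^ 2 + (q - 1) * (b * X ω) ^ 2) ^ (q / 2) ∂μ := by
        rw [integral_const_mul]; ring

end Integral

lemma sub_one_mul_one_div_sqrt_sub_one_mul_rpow_sq {q l : ℝ} (hq : 1 < q) (hl : 0 ≤ l) :
    (q - 1) * (1 / √(q - 1) * l ^ ((1:ℝ) / 2 - 1 / q)) ^ 2 = l ^ (1 - 1 / (q / 2)) := by
  rw [mul_pow, div_pow, one_pow, sq_sqrt (by linarith), ← mul_assoc,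
    mul_one_div_cancel (by linarith), one_mul, ← rpow_natCast, ← rpow_mul hl]
  congr 1
  field_simp
  ring

/-- A mean-zero, symmetric, finitely-valued random variable `X` with minimum point
probability `λ` is `(2,q,ρ)`-hypercontractive for `ρ = (q−1)^{-1/2} λ^{1/2−1/q}`. -/
theorem discrete_hypercontractivity
    {Ω : Type*} [MeasurableSpace Ω] (μ : Measure Ω) [IsProbabilityMeasure μ]
    (X : Ω → ℝ) (hX : Measurable X) (hfin : (Set.range X).Finite)
    (hmean : ∫ ω, X ω ∂μ = 0)
    (hsym : Measure.map X μ = Measure.map (fun ω => -X ω) μ)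
    (lam : ℝ) (hlam0 : 0 < lam)
    (hlam : IsLeast {r : ℝ | ∃ x ∈ Set.range X, r = (μ (X ⁻¹' {x})).toReal} lam)
    (q : ℝ) (hq : 2 ≤ q) (a b : ℝ) :
    (∫ ω, |a + (1 / Real.sqrt (q - 1) * lam ^ ((1:ℝ)/2 - 1/q)) * b * X ω| ^ q ∂μ)
        ^ (1/q)
      ≤ (∫ ω, (a + b * X ω) ^ 2 ∂μ) ^ ((1:ℝ)/2) := by
  set ρ := 1 / Real.sqrt (q - 1) * lam ^ ((1:ℝ)/2 - 1/q)
  set c := lam ^ (1 - 1 / (q / 2))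
  have hint : ∀ φ : ℝ → ℝ, Measurable φ → Integrable (fun ω => φ (X ω)) μ :=
    fun φ hφ => integrable_comp_of_finite_range hX hfin hφ
  have hρ : (q - 1) * ρ ^ 2 = c :=
    sub_one_mul_one_div_sqrt_sub_one_mul_rpow_sq (by linarith) hlam0.le
  have hlam1 : lam ≤ 1 := by
    obtain ⟨x, -, rfl⟩ := hlam.1
    exact measureReal_le_one
  have hIbX2 : Integrable (fun ω => (b * X ω) ^ 2) μ := hint (fun x => (b * x) ^ 2) (by fun_prop)
  have hbound : ∀ ω, lam * (b * X ω) ^ 2 ≤ ∫ ω, (b * X ω) ^ 2 ∂μ :=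
    mul_le_integral_comp_of_le_measureReal (φ := fun x => (b * x) ^ 2) (fun x => sq_nonneg _)
      hIbX2 fun x hx => hlam.2 ⟨x, hx, rfl⟩
  have hvar : ∫ ω, (a + b * X ω) ^ 2 ∂μ = a ^ 2 + ∫ ω, (b * X ω) ^ 2 ∂μ :=
    integral_add_sq_of_integral_eq_zero (hint (fun x => b * x) (by fun_prop)) hIbX2
      (by rw [integral_const_mul, hmean, mul_zero]) a
  have key : ∫ ω, |a + ρ * b * X ω| ^ q ∂μ ≤ (∫ ω, (a + b * X ω) ^ 2 ∂μ) ^ (q / 2) := calc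
    _ ≤ ∫ ω, (a ^ 2 + (q - 1) * (ρ * b * X ω) ^ 2) ^ (q / 2) ∂μ :=
        integral_abs_add_mul_rpow_le_of_symmetric hX hfin hsym hq a (ρ * b)
    _ = ∫ ω, (a ^ 2 + c * (b * X ω) ^ 2) ^ (q / 2) ∂μ := by
        congr 1 with ω; rw [← hρ]; congr 1; ring
    _ ≤ (a ^ 2 + ∫ ω, (b * X ω) ^ 2 ∂μ) ^ (q / 2) :=
        integral_add_mul_rpow_le (by linarith) hlam0 hlam1 (sq_nonneg a) (fun ω => sq_nonneg _)
          hbound hIbX2 (hint (fun x => (a ^ 2 + c * (b * x) ^ 2) ^ (q / 2)) (by fun_prop))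
    _ = _ := by rw [hvar]
  have hI0 : 0 ≤ ∫ ω, (a + b * X ω) ^ 2 ∂μ := integral_nonneg fun ω => sq_nonneg _
  calc (∫ ω, |a + ρ * b * X ω| ^ q ∂μ) ^ (1 / q)
      ≤ ((∫ ω, (a + b * X ω) ^ 2 ∂μ) ^ (q / 2)) ^ (1 / q) := by gcongr
    _ = (∫ ω, (a + b * X ω) ^ 2 ∂μ) ^ ((1:ℝ) / 2) := by
        rw [← rpow_mul hI0]; congr 1; field_simp
end
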